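/- arXiv:1711.05528 — 6 statements merged into one kernel-verified Lean document; each statement's English description precedes it below -/
import Mathlib

section
/- For every x ∈ X, every t ≥ 0 and every y ∈ Y one has ⟨R(0)x − R(0)T(t)x, y⟩ = ∫₀ᵗ ⟨T(s)x, y⟩ ds. Consequently the vector v_t := R(0)x − R(0)T(t)x is the weak integral ∫₀ᵗ T(s)x ds with respect to the dual pair (X,Y), it belongs to dom(A), and A v_t = T(t)x − x. -/
/-!
`R(0)` is the weak Laplace transform of `T` at `0`, i.e. `⟨R(0)z, y⟩ = ∫₀^∞ ⟨T(s)z, y⟩ ds`. Applying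
this to `z = T(t)x` and using `T(s)T(t) = T(s+t)` turns `⟨R(0)T(t)x, y⟩` into the tail `∫ₜ^∞ ⟨T(s)x, y⟩ ds`,
so the difference with `⟨R(0)x, y⟩` is `∫₀ᵗ ⟨T(s)x, y⟩ ds`. Since `(0 - A)R(0) = I`, we have `A R(0) z = -z`,
and additivity of `A` on `dom(A)` gives `A v_t = T(t)x - x`.
-/

open MeasureTheory Set

theorem map_sub_of_map_add_on {G H : Type*} [AddGroup G] [AddGroup H] {S : AddSubgroup G}
    {A : G → H} (hA : ∀ u ∈ S, ∀ v ∈ S, A (u + v) = A u + A v) {u v : G} (hu : u ∈ S)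
    (hv : v ∈ S) : A (u - v) = A u - A v :=
  eq_sub_of_add_eq (by rw [← hA _ (S.sub_mem hu hv) _ hv, sub_add_cancel])

section Integrals

variable {E : Type*} [NormedAddCommGroup E] [NormedSpace ℝ E]

theorem setIntegral_Ioi_comp_add_right (f : ℝ → E) (a t : ℝ) :
    ∫ s in Ioi a, f (s + t) = ∫ s in Ioi (a + t), f s := by
  have hpre : (· + t) ⁻¹' Ioi (a + t) = Ioi a := by
    ext s
    simp
  rw [← (measurePreserving_add_right volume t).setIntegral_preimage_emb
    (MeasurableEquiv.addRight t).measurableEmbedding f (Ioi (a + t)), hpre]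

theorem integral_Ioi_sub_integral_Ioi_comp_add_right {f : ℝ → E} {t : ℝ}
    (hf : IntegrableOn f (Ioi 0)) (ht : 0 ≤ t) :
    (∫ s in Ioi 0, f s) - ∫ s in Ioi 0, f (s + t) = ∫ s in (0 : ℝ)..t, f s := by
  rw [setIntegral_Ioi_comp_add_right, zero_add, intervalIntegral.integral_Ioi_sub_Ioi hf ht]

end Integrals

theorem statement4_general
    {X : Type*} [NormedAddCommGroup X] [NormedSpace ℂ X]
    (Y : Submodule ℂ (X →L[ℂ] ℂ))
    (T : ℝ → X →L[ℂ] X)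
    (hTsg : ∀ s t : ℝ, 0 ≤ s → 0 ≤ t → T (t + s) = (T t).comp (T s))
    (dom : Submodule ℂ X) (A : X → X)
    (hA_add : ∀ x ∈ dom, ∀ y ∈ dom, A (x + y) = A x + A y)
    (R : ℝ → X →L[ℂ] X)
    (hRdom : ∀ l : ℝ, 0 ≤ l → ∀ x : X, R l x ∈ dom)
    (hR1 : ∀ l : ℝ, 0 ≤ l → ∀ x : X, (l : ℂ) • R l x - A (R l x) = x)
    (hlap : ∀ l : ℝ, 0 ≤ l → ∀ (x : X), ∀ y ∈ Y,
      IntegrableOn (fun s : ℝ => Real.exp (-l * s) • y (T s x)) (Set.Ioi 0) ∧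
      y (R l x) = ∫ s in Set.Ioi (0:ℝ), Real.exp (-l * s) • y (T s x))
    (x : X) (t : ℝ) (ht : 0 ≤ t) :
    (∀ y ∈ Y, y (R 0 x - R 0 (T t x)) = ∫ s in (0:ℝ)..t, y (T s x)) ∧
    R 0 x - R 0 (T t x) ∈ dom ∧
    A (R 0 x - R 0 (T t x)) = T t x - x := by
  have hA_resolvent : ∀ z, A (R 0 z) = -z := fun z ↦
    neg_eq_iff_eq_neg.mp (by simpa using hR1 0 le_rfl z)
  refine ⟨fun y hy ↦ ?_, dom.sub_mem (hRdom 0 le_rfl x) (hRdom 0 le_rfl _), ?_⟩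
  · have hlap0 : ∀ z, IntegrableOn (fun s ↦ y (T s z)) (Ioi 0) ∧
        y (R 0 z) = ∫ s in Ioi (0 : ℝ), y (T s z) := fun z ↦ by
      simpa using hlap 0 le_rfl z y hy
    calc y (R 0 x - R 0 (T t x))
        = (∫ s in Ioi (0 : ℝ), y (T s x)) - ∫ s in Ioi (0 : ℝ), y (T (s + t) x) := by
          rw [map_sub, (hlap0 x).2, (hlap0 _).2]
          congr 1
          refine setIntegral_congr_fun measurableSet_Ioi fun s hs ↦ ?_
          simp [hTsg t s ht (le_of_lt hs)]
      _ = ∫ s in (0 : ℝ)..t, y (T s x) :=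
          integral_Ioi_sub_integral_Ioi_comp_add_right (hlap0 x).1 ht
  · rw [map_sub_of_map_add_on (S := dom.toAddSubgroup) hA_add (hRdom 0 le_rfl x)
      (hRdom 0 le_rfl _), hA_resolvent, hA_resolvent, neg_sub_neg]

/-- For every `x ∈ X`, `t ≥ 0` and `y ∈ Y`:
`⟨R(0)x − R(0)T(t)x, y⟩ = ∫₀ᵗ ⟨T(s)x, y⟩ ds`; consequently
`v_t := R(0)x − R(0)T(t)x ∈ dom(A)` and `A v_t = T(t)x − x`. -/
theorem statement4
    {X : Type*} [NormedAddCommGroup X] [NormedSpace ℂ X] [CompleteSpace X]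
    (Y : Submodule ℂ (X →L[ℂ] ℂ))
    (hnorming : ∀ x : X, ‖x‖ = sSup {r : ℝ | ∃ y ∈ Y, ‖y‖ ≤ 1 ∧ r = ‖y x‖})
    (T : ℝ → X →L[ℂ] X)
    (hT0 : T 0 = 1)
    (hTsg : ∀ s t : ℝ, 0 ≤ s → 0 ≤ t → T (t + s) = (T t).comp (T s))
    (M ω : ℝ) (hM : 1 ≤ M) (hω : ω < 0)
    (hgrowth : ∀ t : ℝ, 0 ≤ t → ‖T t‖ ≤ M * Real.exp (ω * t))
    (dom : Submodule ℂ X) (A : X → X)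
    (hA_add : ∀ x ∈ dom, ∀ y ∈ dom, A (x + y) = A x + A y)
    (hA_smul : ∀ (c : ℂ), ∀ x ∈ dom, A (c • x) = c • A x)
    (R : ℝ → X →L[ℂ] X)
    (hRdom : ∀ l : ℝ, 0 ≤ l → ∀ x : X, R l x ∈ dom)
    (hR1 : ∀ l : ℝ, 0 ≤ l → ∀ x : X, (l : ℂ) • R l x - A (R l x) = x)
    (hR2 : ∀ l : ℝ, 0 ≤ l → ∀ x ∈ dom, R l ((l : ℂ) • x - A x) = x)
    (hmeas : ∀ (x : X), ∀ y ∈ Y, Measurable ((Set.Ici (0:ℝ)).restrict fun s : ℝ => y (T s x)))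
    (hlap : ∀ l : ℝ, 0 ≤ l → ∀ (x : X), ∀ y ∈ Y,
      IntegrableOn (fun s : ℝ => Real.exp (-l * s) • y (T s x)) (Set.Ioi 0) ∧
      y (R l x) = ∫ s in Set.Ioi (0:ℝ), Real.exp (-l * s) • y (T s x))
    (hcomm : ∀ t : ℝ, 0 ≤ t → (T t).comp (R 0) = (R 0).comp (T t))
    (x : X) (t : ℝ) (ht : 0 ≤ t) :
    (∀ y ∈ Y, y (R 0 x - R 0 (T t x)) = ∫ s in (0:ℝ)..t, y (T s x)) ∧
    R 0 x - R 0 (T t x) ∈ dom ∧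
    A (R 0 x - R 0 (T t x)) = T t x - x :=
  statement4_general Y T hTsg dom A hA_add R hRdom hR1 hlap x t ht
end

section
/- The norm closure of dom(A) equals the space of strong norm continuity of the semigroup: closure(dom(A)) = {x ∈ X : the map t ↦ T(t)x is norm continuous on [0,∞)}. -/
open scoped Topology
open MeasureTheory

set_option maxHeartbeats 1000000

lemma myIntegral_Ioi_comp_add (f : ℝ → ℂ) (t : ℝ) :
    ∫ s in Set.Ioi (0:ℝ), f (s + t) = ∫ s in Set.Ioi t, f s := by
  rw [← integral_indicator measurableSet_Ioi, ← integral_indicator measurableSet_Ioi]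
  rw [← integral_add_right_eq_self (fun s => (Set.Ioi t).indicator f s) t]
  congr 1
  ext s
  by_cases h : s ∈ Set.Ioi (0:ℝ)
  · rw [Set.indicator_of_mem h, Set.indicator_of_mem (by simpa using h)]
  · rw [Set.indicator_of_notMem h, Set.indicator_of_notMem (by simpa using h)]

lemma myExpInt (l a : ℝ) (hl : 0 < l) :
    ∫ s in Set.Ioi a, l * Real.exp (-l * s) = Real.exp (-l * a) := by
  have h := integral_comp_mul_left_Ioi (fun u => Real.exp (-u)) a hl
  simp only [smul_eq_mul] at h
  rw [integral_exp_neg_Ioi] at h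
  rw [MeasureTheory.integral_const_mul]
  rw [show (fun s => Real.exp (-l*s)) = (fun s => Real.exp (-(l*s))) by ext s; ring_nf]
  rw [h]
  field_simp

lemma myNormLe {X : Type*} [NormedAddCommGroup X] [NormedSpace ℂ X]
    (Y : Submodule ℂ (X →L[ℂ] ℂ))
    (hnorming : ∀ x : X, ‖x‖ = sSup {r : ℝ | ∃ y ∈ Y, ‖y‖ ≤ 1 ∧ r = ‖y x‖})
    (z : X) (B : ℝ) (hB : 0 ≤ B)
    (h : ∀ y : X →L[ℂ] ℂ, y ∈ Y → ‖y‖ ≤ 1 → ‖y z‖ ≤ B) : ‖z‖ ≤ B := by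
  rw [hnorming z]
  apply Real.sSup_le _ hB
  rintro r ⟨y, hy, hy1, rfl⟩
  exact h y hy hy1

/-- The norm closure of `dom(A)` equals the space of strong norm
continuity of the semigroup: `closure(dom(A)) = {x : t ↦ T(t)x is norm continuous on [0,∞)}`. -/
theorem statement6
    {X : Type*} [NormedAddCommGroup X] [NormedSpace ℂ X] [CompleteSpace X]
    (Y : Submodule ℂ (X →L[ℂ] ℂ))
    (hnorming : ∀ x : X, ‖x‖ = sSup {r : ℝ | ∃ y ∈ Y, ‖y‖ ≤ 1 ∧ r = ‖y x‖})
    (T : ℝ → X →L[ℂ] X)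
    (hT0 : T 0 = 1)
    (hTsg : ∀ s t : ℝ, 0 ≤ s → 0 ≤ t → T (t + s) = (T t).comp (T s))
    (M ω : ℝ) (hM : 1 ≤ M) (hω : ω < 0)
    (hgrowth : ∀ t : ℝ, 0 ≤ t → ‖T t‖ ≤ M * Real.exp (ω * t))
    (dom : Submodule ℂ X) (A : X → X)
    (hA_add : ∀ x ∈ dom, ∀ y ∈ dom, A (x + y) = A x + A y)
    (hA_smul : ∀ (c : ℂ), ∀ x ∈ dom, A (c • x) = c • A x)
    (R : ℝ → X →L[ℂ] X)
    (hRdom : ∀ l : ℝ, 0 ≤ l → ∀ x : X, R l x ∈ dom)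
    (hR1 : ∀ l : ℝ, 0 ≤ l → ∀ x : X, (l : ℂ) • R l x - A (R l x) = x)
    (hR2 : ∀ l : ℝ, 0 ≤ l → ∀ x ∈ dom, R l ((l : ℂ) • x - A x) = x)
    (hmeas : ∀ (x : X), ∀ y ∈ Y, Measurable ((Set.Ici (0:ℝ)).restrict fun s : ℝ => y (T s x)))
    (hlap : ∀ l : ℝ, 0 ≤ l → ∀ (x : X), ∀ y ∈ Y,
      IntegrableOn (fun s : ℝ => Real.exp (-l * s) • y (T s x)) (Set.Ioi 0) ∧
      y (R l x) = ∫ s in Set.Ioi (0:ℝ), Real.exp (-l * s) • y (T s x))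
    (hcomm : ∀ t : ℝ, 0 ≤ t → (T t).comp (R 0) = (R 0).comp (T t)) :
    closure (dom : Set X) = {x : X | ContinuousOn (fun s : ℝ => T s x) (Set.Ici 0)} := by
  have hM0 : (0:ℝ) < M := lt_of_lt_of_le one_pos hM
  have hTbound : ∀ s : ℝ, 0 ≤ s → ∀ v : X, ‖T s v‖ ≤ M * ‖v‖ := by
    intro s hs v
    have h1 : ‖T s v‖ ≤ ‖T s‖ * ‖v‖ := (T s).le_opNorm v
    have h2 : ‖T s‖ ≤ M * Real.exp (ω * s) := hgrowth s hs
    have h3 : Real.exp (ω * s) ≤ 1 := Real.exp_le_one_iff.mpr (by nlinarith)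
    calc ‖T s v‖ ≤ ‖T s‖ * ‖v‖ := h1
    _ ≤ (M * Real.exp (ω * s)) * ‖v‖ := mul_le_mul_of_nonneg_right h2 (norm_nonneg v)
    _ ≤ (M * 1) * ‖v‖ := mul_le_mul_of_nonneg_right
        (mul_le_mul_of_nonneg_left h3 hM0.le) (norm_nonneg v)
    _ = M * ‖v‖ := by ring
  have hint : ∀ (z : X) (y : X →L[ℂ] ℂ), y ∈ Y →
      IntegrableOn (fun s : ℝ => y (T s z)) (Set.Ioi 0) := by
    intro z y hy
    have := (hlap 0 le_rfl z y hy).1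
    simpa using this
  have hlap0 : ∀ (z : X) (y : X →L[ℂ] ℂ), y ∈ Y →
      y (R 0 z) = ∫ s in Set.Ioi (0:ℝ), y (T s z) := by
    intro z y hy
    have := (hlap 0 le_rfl z y hy).2
    simpa using this
  have wrep : ∀ (z : X) (t : ℝ), 0 ≤ t → ∀ (y : X →L[ℂ] ℂ), y ∈ Y →
      y (T t (R 0 z)) = ∫ s in Set.Ioi t, y (T s z) := by
    intro z t ht y hy
    have h1 : T t (R 0 z) = R 0 (T t z) := by
      have h := congrArg (fun f : X →L[ℂ] X => f z) (hcomm t ht)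
      simpa using h
    rw [h1, hlap0 (T t z) y hy]
    rw [setIntegral_congr_fun measurableSet_Ioi
      (g := fun s => (fun u => y (T u z)) (s + t)) (by
        intro s hs
        have h2 := hTsg t s ht (le_of_lt hs)
        simp only [h2, ContinuousLinearMap.comp_apply])]
    exact myIntegral_Ioi_comp_add (fun u => y (T u z)) t
  have key : ∀ (z : X) (t t' : ℝ), 0 ≤ t' → t' ≤ t →
      ‖T t (R 0 z) - T t' (R 0 z)‖ ≤ M * ‖z‖ * (t - t') := by
    intro z t t' ht' htt
    have ht : 0 ≤ t := le_trans ht' htt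
    apply myNormLe Y hnorming _ _
      (mul_nonneg (mul_nonneg hM0.le (norm_nonneg z)) (sub_nonneg.mpr htt))
    intro y hy hy1
    have e1 := wrep z t ht y hy
    have e2 := wrep z t' ht' y hy
    have hsubIoc : Set.Ioc t' t ⊆ Set.Ioi (0:ℝ) :=
      Set.Subset.trans Set.Ioc_subset_Ioi_self (Set.Ioi_subset_Ioi ht')
    have hsubIoi : Set.Ioi t ⊆ Set.Ioi (0:ℝ) := Set.Ioi_subset_Ioi ht
    have hsplit : ∫ s in Set.Ioi t', y (T s z) =
        (∫ s in Set.Ioc t' t, y (T s z)) + ∫ s in Set.Ioi t, y (T s z) := by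
      rw [← setIntegral_union (Set.Ioc_disjoint_Ioi le_rfl) measurableSet_Ioi
        ((hint z y hy).mono_set hsubIoc) ((hint z y hy).mono_set hsubIoi),
        Set.Ioc_union_Ioi_eq_Ioi htt]
    have hvv : y ((T t) (R 0 z) - (T t') (R 0 z)) = -∫ s in Set.Ioc t' t, y (T s z) := by
      rw [map_sub, e1, e2, hsplit]; ring
    rw [hvv, norm_neg]
    have hb : ∀ s ∈ Set.Ioc t' t, ‖y (T s z)‖ ≤ M * ‖z‖ := by
      intro s hs
      have h1 : ‖y (T s z)‖ ≤ ‖y‖ * ‖T s z‖ := y.le_opNorm _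
      have h2 : ‖T s z‖ ≤ M * ‖z‖ := hTbound s (le_trans ht' (le_of_lt hs.1)) z
      nlinarith [norm_nonneg (T s z), norm_nonneg y]
    have hfin : volume (Set.Ioc t' t) < ⊤ := measure_Ioc_lt_top
    have := norm_setIntegral_le_of_norm_le_const hfin hb
    rwa [measureReal_def, Real.volume_Ioc, ENNReal.toReal_ofReal (sub_nonneg.mpr htt)] at this
  -- Direction 1: closure dom ⊆ continuity set
  have dir1 : ∀ x ∈ closure (dom : Set X),
      ContinuousOn (fun s : ℝ => T s x) (Set.Ici 0) := by
    intro x hx t ht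
    rw [Metric.continuousWithinAt_iff]
    intro ε hε
    obtain ⟨b, hbdom, hbx⟩ := Metric.mem_closure_iff.mp hx (ε / (3 * M)) (by positivity)
    set z : X := ((0:ℝ) : ℂ) • b - A b with hz
    have hb : R 0 z = b := by
      have := hR2 0 le_rfl b hbdom
      simpa [hz] using this
    have hL : ∀ s u : ℝ, 0 ≤ s → 0 ≤ u → ‖T s b - T u b‖ ≤ M * ‖z‖ * |s - u| := by
      intro s u hs hu
      rcases le_total u s with h | h
      · rw [abs_of_nonneg (sub_nonneg.mpr h)]
        have := key z s u hu h
        rwa [hb] at this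
      · rw [abs_of_nonpos (sub_nonpos.mpr h), ← norm_neg, neg_sub]
        have := key z u s hs h
        rw [hb] at this
        simpa using this
    refine ⟨(ε/3) / (M * ‖z‖ + 1), by positivity, ?_⟩
    intro s hs hst
    have ht0 : (0:ℝ) ≤ t := ht
    have hs0 : (0:ℝ) ≤ s := hs
    have h1 : ‖T s x - T s b‖ ≤ M * ‖x - b‖ := by
      have := hTbound s hs0 (x - b)
      simpa [map_sub] using this
    have h3 : ‖T t b - T t x‖ ≤ M * ‖x - b‖ := by
      have := hTbound t ht0 (b - x)
      simp only [map_sub] at this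
      calc ‖T t b - T t x‖ = ‖T t (b - x)‖ := by rw [map_sub]
      _ ≤ M * ‖b - x‖ := hTbound t ht0 (b - x)
      _ = M * ‖x - b‖ := by rw [norm_sub_rev]
    have h2 : ‖T s b - T t b‖ ≤ M * ‖z‖ * |s - t| := hL s t hs0 ht0
    have hdistxb : M * ‖x - b‖ < ε / 3 := by
      have : dist x b < ε / (3 * M) := hbx
      rw [dist_eq_norm] at this
      rw [div_mul_eq_div_div] at this
      have := (lt_div_iff₀ hM0).mp this
      linarith [mul_comm M ‖x - b‖ ▸ this]
    have hmid : M * ‖z‖ * |s - t| < ε / 3 := by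
      have h4 : |s - t| < (ε/3) / (M * ‖z‖ + 1) := by
        rw [Real.dist_eq] at hst; exact hst
      have h5 : 0 ≤ M * ‖z‖ := mul_nonneg hM0.le (norm_nonneg z)
      have h6 : 0 < M * ‖z‖ + 1 := by linarith
      have := mul_lt_mul_of_pos_left h4 h6
      rw [mul_div_cancel₀ _ h6.ne'] at this
      nlinarith [abs_nonneg (s - t)]
    rw [dist_eq_norm]
    calc ‖T s x - T t x‖
        ≤ ‖T s x - T s b‖ + ‖T s b - T t b‖ + ‖T t b - T t x‖ := by
          have := norm_add₃_le (a := T s x - T s b) (b := T s b - T t b) (c := T t b - T t x)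
          simpa using this
      _ < ε / 3 + ε / 3 + ε / 3 := by
          apply add_lt_add (add_lt_add_of_lt_of_le (lt_of_le_of_lt h1 hdistxb)
            (le_of_lt (lt_of_le_of_lt h2 hmid))) (lt_of_le_of_lt h3 hdistxb)
      _ = ε := by ring
  -- Direction 2: continuity ⊆ closure dom
  have dir2 : ∀ x : X, ContinuousOn (fun s : ℝ => T s x) (Set.Ici 0) →
      x ∈ closure (dom : Set X) := by
    intro x hx
    rw [Metric.mem_closure_iff]
    intro ε hε
    set ε' := ε / 3 with hε'def
    have hε'pos : 0 < ε' := by positivity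
    have h0 := hx 0 Set.self_mem_Ici
    rw [Metric.continuousWithinAt_iff] at h0
    obtain ⟨δ₀, hδ₀, hδ⟩ := h0 ε' hε'pos
    set δ := δ₀ / 2 with hδdef
    have hδpos : 0 < δ := by positivity
    have hnear : ∀ s : ℝ, 0 < s → s ≤ δ → ‖T s x - x‖ ≤ ε' := by
      intro s hs hsδ
      have hd : dist (T s x) (T 0 x) < ε' := by
        apply hδ (Set.mem_Ici.mpr hs.le)
        rw [Real.dist_eq, sub_zero, abs_of_nonneg hs.le]
        linarith
      rw [dist_eq_norm, hT0] at hd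
      simpa using hd.le
    set c := (M + 1) * ‖x‖ + 1 with hcdef
    have hcpos : 0 < c := by positivity
    set l := max 1 (Real.log (c / ε') / δ + 1) with hldef
    have hl1 : (1:ℝ) ≤ l := le_max_left _ _
    have hlpos : 0 < l := lt_of_lt_of_le one_pos hl1
    have hexp : Real.exp (-l * δ) < ε' / c := by
      rw [show ε' / c = Real.exp (Real.log (ε' / c)) from (Real.exp_log (by positivity)).symm]
      apply Real.exp_lt_exp.mpr
      rw [Real.log_div hε'pos.ne' hcpos.ne']
      have h2 : Real.log (c / ε') / δ + 1 ≤ l := le_max_right _ _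
      have h3 : Real.log (c / ε') = Real.log c - Real.log ε' :=
        Real.log_div hcpos.ne' hε'pos.ne'
      have h4 := mul_le_mul_of_nonneg_right h2 hδpos.le
      have h5 : Real.log (c / ε') / δ * δ = Real.log (c / ε') :=
        div_mul_cancel₀ _ hδpos.ne'
      nlinarith
    refine ⟨((l : ℝ) : ℂ) • R l x, Submodule.smul_mem _ _ (hRdom l hlpos.le x), ?_⟩
    have hbound : ‖((l : ℝ) : ℂ) • R l x - x‖ ≤ ε' + Real.exp (-l * δ) * ((M+1) * ‖x‖) := by
      apply myNormLe Y hnorming _ _ (by positivity)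
      intro y hy hy1
      have hyR := (hlap l hlpos.le x y hy).2
      have hint1 : IntegrableOn (fun s : ℝ => Real.exp (-l * s) • y (T s x)) (Set.Ioi 0) :=
        (hlap l hlpos.le x y hy).1
      have hexpint : IntegrableOn (fun s : ℝ => Real.exp (-l * s)) (Set.Ioi 0) :=
        exp_neg_integrableOn_Ioi 0 hlpos
      have hint2 : IntegrableOn (fun s : ℝ => Real.exp (-l * s) • (y x)) (Set.Ioi 0) :=
        hexpint.smul_const (y x)
      have hone : ∫ s in Set.Ioi (0:ℝ), l * Real.exp (-l * s) = 1 := by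
        rw [myExpInt l 0 hlpos]
        simp
      have hval : y (((l : ℝ) : ℂ) • R l x - x) =
          ∫ s in Set.Ioi (0:ℝ), (l * Real.exp (-l * s)) • (y (T s x) - y x) := by
        have e1 : ∫ s in Set.Ioi (0:ℝ), (l * Real.exp (-l * s)) • (y (T s x) - y x)
            = (∫ s in Set.Ioi (0:ℝ), l • (Real.exp (-l * s) • y (T s x)))
              - ∫ s in Set.Ioi (0:ℝ), l • (Real.exp (-l * s) • (y x)) := by
          have i1 : Integrable (fun s : ℝ => l • (Real.exp (-l * s) • y (T s x)))
              (volume.restrict (Set.Ioi 0)) := hint1.smul l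
          have i2 : Integrable (fun s : ℝ => l • (Real.exp (-l * s) • (y x)))
              (volume.restrict (Set.Ioi 0)) := hint2.smul l
          rw [← integral_sub i1 i2]
          congr 1
          ext s
          simp [mul_smul, smul_sub]
        rw [e1, integral_smul, ← hyR]
        have e2 : ∫ s in Set.Ioi (0:ℝ), l • (Real.exp (-l * s) • (y x))
            = (∫ s in Set.Ioi (0:ℝ), l * Real.exp (-l * s)) • (y x) := by
          rw [← integral_smul_const]
          congr 1
          ext s
          rw [mul_smul]
        rw [e2, hone, one_smul, map_sub, _root_.map_smul, Complex.coe_smul]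
      rw [hval]
      set G : ℝ → ℝ := fun s => (l * Real.exp (-l * s)) * ε' +
        (Set.Ioi δ).indicator (fun s => (l * Real.exp (-l * s)) * ((M+1) * ‖x‖)) s with hGdef
      have hGint1 : IntegrableOn (fun s : ℝ => (l * Real.exp (-l * s)) * ε') (Set.Ioi 0) := by
        simpa [mul_assoc, IntegrableOn] using ((hexpint.const_mul l).mul_const ε')
      have hGint2 : IntegrableOn (fun s : ℝ => (l * Real.exp (-l * s)) * ((M+1) * ‖x‖))
          (Set.Ioi 0) := by
        simpa [mul_assoc, IntegrableOn] using ((hexpint.const_mul l).mul_const ((M+1) * ‖x‖))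
      have hGint : IntegrableOn G (Set.Ioi 0) :=
        hGint1.add (hGint2.indicator measurableSet_Ioi)
      have hptwise : ∀ᵐ s ∂(volume.restrict (Set.Ioi (0:ℝ))),
          ‖(l * Real.exp (-l * s)) • (y (T s x) - y x)‖ ≤ G s := by
        rw [ae_restrict_iff' measurableSet_Ioi]
        apply Filter.Eventually.of_forall
        intro s hs
        have hs0 : 0 < s := hs
        have hr : 0 ≤ l * Real.exp (-l * s) := by positivity
        have hnw : ‖y (T s x) - y x‖ ≤ ‖T s x - x‖ := by
          rw [← map_sub]
          calc ‖y (T s x - x)‖ ≤ ‖y‖ * ‖T s x - x‖ := y.le_opNorm _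
          _ ≤ 1 * ‖T s x - x‖ := mul_le_mul_of_nonneg_right hy1 (norm_nonneg _)
          _ = ‖T s x - x‖ := one_mul _
        rw [norm_smul, Real.norm_eq_abs, abs_of_nonneg hr]
        by_cases hsδ : s ≤ δ
        · have hb1 : ‖T s x - x‖ ≤ ε' := hnear s hs0 hsδ
          have : G s = (l * Real.exp (-l * s)) * ε' := by
            rw [hGdef]
            simp only
            rw [Set.indicator_of_notMem (by simpa using hsδ), add_zero]
          rw [this]
          have := le_trans hnw hb1
          nlinarith
        · push_neg at hsδ
          have hb2 : ‖T s x - x‖ ≤ (M + 1) * ‖x‖ := by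
            have := hTbound s hs0.le x
            calc ‖T s x - x‖ ≤ ‖T s x‖ + ‖x‖ := norm_sub_le _ _
            _ ≤ M * ‖x‖ + ‖x‖ := by linarith
            _ = (M + 1) * ‖x‖ := by ring
          have hGs : G s = (l * Real.exp (-l * s)) * ε'
              + (l * Real.exp (-l * s)) * ((M+1) * ‖x‖) := by
            rw [hGdef]
            simp only
            rw [Set.indicator_of_mem (by simpa using hsδ)]
          rw [hGs]
          have h6 := le_trans hnw hb2
          nlinarith [mul_nonneg hr hε'pos.le]
      have hnorm := norm_integral_le_of_norm_le hGint hptwise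
      have hGval : ∫ s in Set.Ioi (0:ℝ), G s = ε' + Real.exp (-l * δ) * ((M+1) * ‖x‖) := by
        rw [hGdef]
        rw [integral_add hGint1 (hGint2.indicator measurableSet_Ioi)]
        have p1 : ∫ s in Set.Ioi (0:ℝ), (l * Real.exp (-l * s)) * ε' = ε' := by
          rw [integral_mul_const, hone, one_mul]
        have p2 : ∫ s in Set.Ioi (0:ℝ),
            (Set.Ioi δ).indicator (fun s => (l * Real.exp (-l * s)) * ((M+1) * ‖x‖)) s
            = Real.exp (-l * δ) * ((M+1) * ‖x‖) := by
          rw [setIntegral_indicator measurableSet_Ioi]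
          rw [show Set.Ioi (0:ℝ) ∩ Set.Ioi δ = Set.Ioi δ by
            rw [Set.Ioi_inter_Ioi, max_eq_right hδpos.le]]
          rw [integral_mul_const, myExpInt l δ hlpos]
        rw [p1, p2]
      calc ‖∫ s in Set.Ioi (0:ℝ), (l * Real.exp (-l * s)) • (y (T s x) - y x)‖
          ≤ ∫ s in Set.Ioi (0:ℝ), G s := hnorm
        _ = ε' + Real.exp (-l * δ) * ((M+1) * ‖x‖) := hGval
    rw [dist_eq_norm, norm_sub_rev]
    have hlast : Real.exp (-l * δ) * ((M+1) * ‖x‖) < ε' := by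
      have h7 : (M+1) * ‖x‖ ≤ c := by rw [hcdef]; linarith
      have h8 : 0 ≤ (M+1) * ‖x‖ := by positivity
      have h9 := Real.exp_pos (-l * δ)
      have h10 : Real.exp (-l * δ) * ((M+1) * ‖x‖) ≤ Real.exp (-l * δ) * c :=
        mul_le_mul_of_nonneg_left h7 h9.le
      have h11 : Real.exp (-l * δ) * c < (ε' / c) * c :=
        mul_lt_mul_of_pos_right hexp hcpos
      rw [div_mul_cancel₀ _ hcpos.ne'] at h11
      linarith
    calc ‖((l : ℝ) : ℂ) • R l x - x‖ ≤ ε' + Real.exp (-l * δ) * ((M+1) * ‖x‖) := hbound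
      _ < ε' + ε' := by linarith
      _ < ε := by rw [hε'def]; linarith
  ext x
  simp only [Set.mem_setOf_eq]
  exact ⟨fun h => dir1 x h, fun h => dir2 x h⟩
end

section
/- Let (x_n) be a sequence in F_α with sup_n ‖x_n‖_{F_α} ≤ K for some K ≥ 0, and let x ∈ X be such that p(x_n − x) → 0 for every p ∈ 𝒫. Then x ∈ F_α and ‖x‖_{F_α} ≤ K (the Favard norm is sequentially lower semicontinuous for the topology τ on norm-bounded sets). -/
/-!
Bi-equicontinuity gives `p (T t (x_n - x)) → 0` at each fixed `t`, so in
`T t x - x = -T t (x_n - x) + (T t x_n - x_n) + (x_n - x)` the outer terms vanish in every `p`,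
and `p (T t x - x) ≤ K t^α`; the norm is the supremum of the `p`. Bi-equicontinuity applies
only to norm-bounded sequences: since `‖T t₁‖ ≤ 1/2` for some `t₁ > 0` (as `ω < 0`), the
Favard bound gives `‖x_n‖ ≤ ‖T t₁ x_n - x_n‖ + ‖x_n‖ / 2`, i.e. `‖x_n‖ ≤ 2 K t₁^α`.
-/

open Filter Topology

section NormAsSupremum

variable {X : Type*} [NormedAddCommGroup X] [NormedSpace ℝ X] {P : Set (Seminorm ℝ X)}

theorem Seminorm.le_norm_of_norm_eq_sSup (hnorm : ∀ x : X, ‖x‖ = sSup {r : ℝ | ∃ p ∈ P, r = p x})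
    {p : Seminorm ℝ X} (hp : p ∈ P) (y : X) : p y ≤ ‖y‖ := by
  by_cases hb : BddAbove {r : ℝ | ∃ q ∈ P, r = q y}
  · rw [hnorm]
    exact le_csSup hb ⟨p, hp, rfl⟩
  · have hy : y = 0 := norm_eq_zero.mp <| by rw [hnorm]; exact Real.sSup_of_not_bddAbove hb
    simp [hy]

theorem norm_le_of_forall_seminorm_le (hnorm : ∀ x : X, ‖x‖ = sSup {r : ℝ | ∃ p ∈ P, r = p x})
    {y : X} {c : ℝ} (hc : 0 ≤ c) (h : ∀ p ∈ P, p y ≤ c) : ‖y‖ ≤ c := by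
  rw [hnorm]
  refine Real.sSup_le ?_ hc
  rintro r ⟨p, hp, rfl⟩
  exact h p hp

end NormAsSupremum

theorem norm_le_of_norm_apply_sub_le {X : Type*} [NormedAddCommGroup X] [NormedSpace ℝ X]
    {S : X →L[ℝ] X} {q : ℝ} (hq : q < 1) (hS : ‖S‖ ≤ q) {y : X} {c : ℝ}
    (hy : ‖S y - y‖ ≤ c) : ‖y‖ ≤ c / (1 - q) := by
  rw [le_div_iff₀ (by linarith)]
  have hSy : ‖S y‖ ≤ q * ‖y‖ :=
    (S.le_opNorm y).trans (mul_le_mul_of_nonneg_right hS (norm_nonneg y))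
  have htri : ‖y‖ ≤ ‖S y - y‖ + ‖S y‖ := by
    simpa using norm_sub_le (S y - y) (S y)
  linarith

theorem exists_pos_opNorm_le_half_of_growth {X : Type*} [NormedAddCommGroup X]
    [NormedSpace ℝ X] {T : ℝ → X →L[ℝ] X} {M ω : ℝ} (hω : ω < 0)
    (hgrowth : ∀ t : ℝ, 0 ≤ t → ‖T t‖ ≤ M * Real.exp (ω * t)) :
    ∃ t > (0 : ℝ), ‖T t‖ ≤ 1 / 2 := by
  have hdecay : Tendsto (fun t => M * Real.exp (ω * t)) atTop (𝓝 0) := by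
    simpa using (Real.tendsto_exp_atBot.comp
      (tendsto_id.const_mul_atTop_of_neg hω)).const_mul M
  obtain ⟨t, hsmall, ht⟩ :=
    ((hdecay.eventually (gt_mem_nhds (by norm_num : (0 : ℝ) < 1 / 2))).and
      (eventually_gt_atTop 0)).exists
  exact ⟨t, ht, (hgrowth t ht.le).trans hsmall.le⟩

theorem Seminorm.apply_sub_le_of_tendsto {X : Type*} [NormedAddCommGroup X] [NormedSpace ℝ X]
    (p : Seminorm ℝ X) (S : X →L[ℝ] X) {u : ℕ → X} {x : X} {c : ℝ}
    (hSu : Tendsto (fun n => p (S (u n - x))) atTop (𝓝 0))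
    (hu : Tendsto (fun n => p (u n - x)) atTop (𝓝 0))
    (hc : ∀ n, p (S (u n) - u n) ≤ c) : p (S x - x) ≤ c := by
  have hlim : Tendsto (fun n => p (S (u n - x)) + c + p (u n - x)) atTop (𝓝 c) := by
    simpa using (hSu.add_const c).add hu
  refine ge_of_tendsto' hlim fun n => ?_
  have hsplit : S x - x = -S (u n - x) + (S (u n) - u n) + (u n - x) := by
    rw [map_sub]; abel
  calc p (S x - x) ≤ p (-S (u n - x)) + p (S (u n) - u n) + p (u n - x) := by
        rw [hsplit]
        exact (map_add_le_add p _ _).trans (add_le_add_left (map_add_le_add p _ _) _)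
    _ ≤ p (S (u n - x)) + c + p (u n - x) := by
        rw [map_neg_eq_map]
        linarith [hc n]

theorem tendsto_seminorm_apply_of_forall_lt {X : Type*} [NormedAddCommGroup X]
    [NormedSpace ℝ X] (p : Seminorm ℝ X) (v : ℕ → X)
    (h : ∀ ε > (0 : ℝ), ∃ N : ℕ, ∀ n ≥ N, p (v n) < ε) :
    Tendsto (fun n => p (v n)) atTop (𝓝 0) := by
  rw [Metric.tendsto_atTop]
  intro ε hε
  obtain ⟨N, hN⟩ := h ε hε
  exact ⟨N, fun n hn => by simpa [Real.dist_eq, abs_of_nonneg (apply_nonneg p (v n))] using hN n hn⟩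

theorem statement8_general
    {X : Type*} [NormedAddCommGroup X] [NormedSpace ℝ X]
    (P : Set (Seminorm ℝ X))
    (hnorm : ∀ x : X, ‖x‖ = sSup {r : ℝ | ∃ p ∈ P, r = p x})
    (T : ℝ → X →L[ℝ] X)
    (M ω : ℝ) (hω : ω < 0)
    (hgrowth : ∀ t : ℝ, 0 ≤ t → ‖T t‖ ≤ M * Real.exp (ω * t))
    (hbieq : ∀ (u : ℕ → X) (C : ℝ), (∀ n, ‖u n‖ ≤ C) →
      (∀ p ∈ P, Filter.Tendsto (fun n => p (u n)) Filter.atTop (𝓝 0)) →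
      ∀ t₀ > (0:ℝ), ∀ p ∈ P, ∀ ε > (0:ℝ), ∃ N : ℕ, ∀ n ≥ N, ∀ s ∈ Set.Icc (0:ℝ) t₀,
        p (T s (u n)) < ε)
    (α : ℝ)
    (K : ℝ) (u : ℕ → X)
    (huF : ∀ n, ∀ t > (0:ℝ), ‖T t (u n) - u n‖ / t ^ α ≤ K)
    (x : X)
    (hconv : ∀ p ∈ P, Filter.Tendsto (fun n => p (u n - x)) Filter.atTop (𝓝 0)) :
    ∀ t > (0:ℝ), ‖T t x - x‖ / t ^ α ≤ K := by
  have huF' : ∀ n, ∀ t > (0:ℝ), ‖T t (u n) - u n‖ ≤ K * t ^ α := fun n t ht =>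
    (div_le_iff₀ (Real.rpow_pos_of_pos ht α)).mp (huF n t ht)
  obtain ⟨t₁, ht₁, hT₁⟩ := exists_pos_opNorm_le_half_of_growth hω hgrowth
  have hbdd : ∀ n, ‖u n - x‖ ≤ K * t₁ ^ α / (1 - 1 / 2) + ‖x‖ := fun n =>
    (norm_sub_le _ _).trans <|
      add_le_add (norm_le_of_norm_apply_sub_le (by norm_num) hT₁ (huF' n t₁ ht₁)) le_rfl
  intro t ht
  rw [div_le_iff₀ (Real.rpow_pos_of_pos ht α)]
  refine norm_le_of_forall_seminorm_le hnorm ((norm_nonneg _).trans (huF' 0 t ht)) ?_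
  intro p hp
  refine p.apply_sub_le_of_tendsto (T t) ?_ (hconv p hp) fun n =>
    (p.le_norm_of_norm_eq_sSup hnorm hp _).trans (huF' n t ht)
  refine tendsto_seminorm_apply_of_forall_lt p _ fun ε hε => ?_
  obtain ⟨N, hN⟩ := hbieq _ _ hbdd hconv t ht p hp ε hε
  exact ⟨N, fun n hn => hN n hn t ⟨ht.le, le_rfl⟩⟩

/-- The Favard norm `‖·‖_{F_α}` is sequentially lower semicontinuous
for the locally convex topology `τ` on norm-bounded sets: if `(x_n) ⊆ F_α` with
`‖x_n‖_{F_α} ≤ K` and `p(x_n − x) → 0` for every `p ∈ 𝒫`, then `x ∈ F_α` and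
`‖x‖_{F_α} ≤ K`. -/
theorem statement8
    {X : Type*} [NormedAddCommGroup X] [NormedSpace ℝ X] [CompleteSpace X]
    (P : Set (Seminorm ℝ X))
    (hnorm : ∀ x : X, ‖x‖ = sSup {r : ℝ | ∃ p ∈ P, r = p x})
    (hcomplete : ∀ (u : ℕ → X) (C : ℝ), (∀ n, ‖u n‖ ≤ C) →
      (∀ p ∈ P, ∀ ε > (0:ℝ), ∃ N : ℕ, ∀ m ≥ N, ∀ n ≥ N, p (u m - u n) < ε) →
      ∃ x : X, ∀ p ∈ P, Filter.Tendsto (fun n => p (u n - x)) Filter.atTop (𝓝 0))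
    (T : ℝ → X →L[ℝ] X) (hT0 : T 0 = 1)
    (hTsg : ∀ s t : ℝ, 0 ≤ s → 0 ≤ t → T (t + s) = (T t).comp (T s))
    (M ω : ℝ) (hM : 1 ≤ M) (hω : ω < 0)
    (hgrowth : ∀ t : ℝ, 0 ≤ t → ‖T t‖ ≤ M * Real.exp (ω * t))
    (horbit : ∀ x : X, ∀ p ∈ P, ∀ t₀ : ℝ, 0 ≤ t₀ →
      Filter.Tendsto (fun t : ℝ => p (T t x - T t₀ x)) (𝓝[Set.Ici 0] t₀) (𝓝 0))
    (hbieq : ∀ (u : ℕ → X) (C : ℝ), (∀ n, ‖u n‖ ≤ C) →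
      (∀ p ∈ P, Filter.Tendsto (fun n => p (u n)) Filter.atTop (𝓝 0)) →
      ∀ t₀ > (0:ℝ), ∀ p ∈ P, ∀ ε > (0:ℝ), ∃ N : ℕ, ∀ n ≥ N, ∀ s ∈ Set.Icc (0:ℝ) t₀,
        p (T s (u n)) < ε)
    (α : ℝ) (hα : α ∈ Set.Ioo (0:ℝ) 1)
    (K : ℝ) (hK : 0 ≤ K) (u : ℕ → X)
    (huF : ∀ n, ∀ t > (0:ℝ), ‖T t (u n) - u n‖ / t ^ α ≤ K)
    (x : X)
    (hconv : ∀ p ∈ P, Filter.Tendsto (fun n => p (u n - x)) Filter.atTop (𝓝 0)) :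
    ∀ t > (0:ℝ), ‖T t x - x‖ / t ^ α ≤ K :=
  statement8_general P hnorm T M ω hω hgrowth hbieq α K u huF x hconv
end

section
/- The semigroup is strongly τ_{F_α}-continuous at 0 on X_α: for every x ∈ X_α and every p ∈ 𝒫 one has lim_{t→0+} p_{F_α}(T(t)x − x) = 0, i.e. lim_{t→0+} sup_{s>0} s^{−α} p(T(s)(T(t)x − x) − (T(t)x − x)) = 0. -/
open scoped Topology

/-- The Favard norm `‖z‖_{F_α} = sup_{t>0} t^{−α}‖T(t)z − z‖` (as a supremum in `ℝ`). -/
noncomputable def favNorm {X : Type*} [NormedAddCommGroup X] [NormedSpace ℝ X]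
    (T : ℝ → X →L[ℝ] X) (α : ℝ) (z : X) : ℝ :=
  sSup ((fun t : ℝ => ‖T t z - z‖ / t ^ α) '' Set.Ioi 0)

/-- Membership in the Favard space `F_α`. -/
def memFav {X : Type*} [NormedAddCommGroup X] [NormedSpace ℝ X]
    (T : ℝ → X →L[ℝ] X) (α : ℝ) (z : X) : Prop :=
  BddAbove ((fun t : ℝ => ‖T t z - z‖ / t ^ α) '' Set.Ioi 0)

/-- The seminorm `p_{F_α}(z) = sup_{t>0} t^{−α} p(T(t)z − z)`. -/
noncomputable def pFav {X : Type*} [NormedAddCommGroup X] [NormedSpace ℝ X]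
    (T : ℝ → X →L[ℝ] X) (α : ℝ) (p : Seminorm ℝ X) (z : X) : ℝ :=
  sSup ((fun t : ℝ => p (T t z - z) / t ^ α) '' Set.Ioi 0)

/-- Membership in the space `X_α ⊆ F_α`. -/
def memX {X : Type*} [NormedAddCommGroup X] [NormedSpace ℝ X]
    (P : Set (Seminorm ℝ X)) (T : ℝ → X →L[ℝ] X) (α : ℝ) (z : X) : Prop :=
  memFav T α z ∧
    ∀ p ∈ P, Filter.Tendsto (fun t : ℝ => p (T t z - z) / t ^ α)
      (nhdsWithin 0 (Set.Ioi 0)) (nhds 0)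

/-!
Write `z = T(t)x − x`. For small `s`, commutativity of the semigroup gives
`T(s)z − z = T(t)(T(s)x − x) − (T(s)x − x)`, and local bi-equicontinuity applied to the
norm-bounded, `τ`-null family `s^{−α}(T(s)x − x)` makes `s^{−α} p(T(r)(T(s)x − x))` small
uniformly in `r ∈ [0, 1]` once `s < δ`. For `s ≥ δ` the quotient is at most
`(M + 1)‖z‖ / δ^α ≤ (M + 1)‖x‖_{F_α} t^α / δ^α`, which is small once `t` is.
-/

open Filter Set

section

variable {X : Type*} [NormedAddCommGroup X] [NormedSpace ℝ X]

lemma seminorm_le_norm_of_norm_eq_sSup {P : Set (Seminorm ℝ X)}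
    (hnorm : ∀ x : X, ‖x‖ = sSup {r : ℝ | ∃ p ∈ P, r = p x}) {p : Seminorm ℝ X} (hp : p ∈ P)
    (y : X) : p y ≤ ‖y‖ := by
  by_cases hb : BddAbove {r : ℝ | ∃ p ∈ P, r = p y}
  · exact (hnorm y).symm ▸ le_csSup hb ⟨p, hp, rfl⟩
  · have hy : y = 0 := norm_eq_zero.mp <| by rw [hnorm y, Real.sSup_of_not_bddAbove hb]
    simp [hy]

lemma eventually_forall_Icc_seminorm_lt {P : Set (Seminorm ℝ X)} {T : ℝ → X →L[ℝ] X}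
    (hbieq : ∀ (u : ℕ → X) (C : ℝ), (∀ n, ‖u n‖ ≤ C) →
      (∀ p ∈ P, Tendsto (fun n => p (u n)) atTop (𝓝 0)) →
      ∀ t₀ > (0:ℝ), ∀ p ∈ P, ∀ ε > (0:ℝ), ∃ N : ℕ, ∀ n ≥ N, ∀ s ∈ Icc (0:ℝ) t₀,
        p (T s (u n)) < ε)
    {ι : Type*} {l : Filter ι} [l.IsCountablyGenerated] {u : ι → X} {C : ℝ}
    (hC : ∀ᶠ i in l, ‖u i‖ ≤ C) (hu : ∀ q ∈ P, Tendsto (fun i => q (u i)) l (𝓝 0))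
    {t₀ : ℝ} (ht₀ : 0 < t₀) {p : Seminorm ℝ X} (hp : p ∈ P) {ε : ℝ} (hε : 0 < ε) :
    ∀ᶠ i in l, ∀ r ∈ Icc 0 t₀, p (T r (u i)) < ε := by
  by_contra h
  obtain ⟨v, hv, hbad⟩ := frequently_iff_seq_forall.mp ((not_eventually.mp h).and_eventually hC)
  obtain ⟨N, hN⟩ := hbieq (u ∘ v) C (fun n => (hbad n).2) (fun q hq => (hu q hq).comp hv)
    t₀ ht₀ p hp ε hε
  exact (hbad N).1 (hN N le_rfl)

variable (T : ℝ → X →L[ℝ] X) (α : ℝ)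

lemma norm_sub_le_favNorm_mul {x : X} (hx : memFav T α x) {t : ℝ} (ht : 0 < t) :
    ‖T t x - x‖ ≤ favNorm T α x * t ^ α :=
  (div_le_iff₀ (Real.rpow_pos_of_pos ht α)).mp (le_csSup hx ⟨t, ht, rfl⟩)

lemma tendsto_norm_sub_of_memFav {x : X} (hx : memFav T α x) (hα : 0 < α) :
    Tendsto (fun t => ‖T t x - x‖) (𝓝[>] 0) (𝓝 0) := by
  have hpow : Tendsto (fun t : ℝ => favNorm T α x * t ^ α) (𝓝[>] 0) (𝓝 0) := by
    simpa [Real.zero_rpow hα.ne'] using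
      ((Real.continuousAt_rpow_const 0 α (Or.inr hα.le)).tendsto.mono_left
        nhdsWithin_le_nhds).const_mul (favNorm T α x)
  exact squeeze_zero' (Eventually.of_forall fun _ => norm_nonneg _)
    (eventually_mem_nhdsWithin.mono fun t ht => norm_sub_le_favNorm_mul T α hx ht) hpow

lemma pFav_nonneg (p : Seminorm ℝ X) (z : X) : 0 ≤ pFav T α p z :=
  Real.sSup_nonneg <| by
    rintro _ ⟨s, hs, rfl⟩
    exact div_nonneg (apply_nonneg p _) (Real.rpow_nonneg (le_of_lt hs) α)

lemma pFav_le {p : Seminorm ℝ X} {z : X} {c : ℝ} (hc : 0 ≤ c)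
    (h : ∀ s > 0, p (T s z - z) ≤ c * s ^ α) : pFav T α p z ≤ c :=
  Real.sSup_le (by
    rintro _ ⟨s, hs, rfl⟩
    exact (div_le_iff₀ (Real.rpow_pos_of_pos hs α)).mpr (h s hs)) hc

lemma exists_forall_seminorm_le_of_memX {P : Set (Seminorm ℝ X)}
    (hbieq : ∀ (u : ℕ → X) (C : ℝ), (∀ n, ‖u n‖ ≤ C) →
      (∀ p ∈ P, Tendsto (fun n => p (u n)) atTop (𝓝 0)) →
      ∀ t₀ > (0:ℝ), ∀ p ∈ P, ∀ ε > (0:ℝ), ∃ N : ℕ, ∀ n ≥ N, ∀ s ∈ Icc (0:ℝ) t₀,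
        p (T s (u n)) < ε)
    {x : X} (hx : memX P T α x) {t₀ : ℝ} (ht₀ : 0 < t₀) {p : Seminorm ℝ X} (hp : p ∈ P)
    {ε : ℝ} (hε : 0 < ε) :
    ∃ δ > 0, ∀ s ∈ Ioo 0 δ, ∀ r ∈ Icc 0 t₀, p (T r (T s x - x)) ≤ ε * s ^ α := by
  set u : ℝ → X := fun s => (s ^ α)⁻¹ • (T s x - x)
  have hscale : ∀ s > 0, ∀ (q : Seminorm ℝ X) (A : X →L[ℝ] X),
      q (A (u s)) = q (A (T s x - x)) / s ^ α := fun s hs q A => by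
    rw [map_smul, map_smul_eq_mul, Real.norm_eq_abs, abs_inv,
      abs_of_pos (Real.rpow_pos_of_pos hs α), inv_mul_eq_div]
  have hC : ∀ᶠ s in 𝓝[>] 0, ‖u s‖ ≤ favNorm T α x :=
    eventually_mem_nhdsWithin.mono fun s (hs : 0 < s) => by
      have hnorm_u : ‖u s‖ = ‖T s x - x‖ / s ^ α := by
        simpa using hscale s hs (normSeminorm ℝ X) 1
      exact hnorm_u ▸ le_csSup hx.1 ⟨s, hs, rfl⟩
  have hu : ∀ q ∈ P, Tendsto (fun s => q (u s)) (𝓝[>] 0) (𝓝 0) := fun q hq =>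
    (hx.2 q hq).congr' <| eventually_mem_nhdsWithin.mono fun s (hs : 0 < s) => by
      simpa using (hscale s hs q 1).symm
  obtain ⟨δ, hδ, hsmall⟩ := (nhdsGT_basis 0).eventually_iff.mp
    (eventually_forall_Icc_seminorm_lt hbieq hC hu ht₀ hp hε)
  refine ⟨δ, hδ, fun s hs r hr => ?_⟩
  have := hsmall hs r hr
  rw [hscale s hs.1, div_lt_iff₀ (Real.rpow_pos_of_pos hs.1 α)] at this
  exact this.le

variable {T}

lemma semigroup_apply_comm
    (hTsg : ∀ s t : ℝ, 0 ≤ s → 0 ≤ t → T (t + s) = (T t).comp (T s))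
    {s t : ℝ} (hs : 0 ≤ s) (ht : 0 ≤ t) (x : X) : T t (T s x) = T s (T t x) := by
  change (T t).comp (T s) x = (T s).comp (T t) x
  rw [← hTsg s t hs ht, ← hTsg t s ht hs, add_comm]

lemma pFav_orbit_sub_le
    (hTsg : ∀ s t : ℝ, 0 ≤ s → 0 ≤ t → T (t + s) = (T t).comp (T s)) (hT0 : T 0 = 1)
    {K : ℝ} (hK : ∀ s ≥ 0, ‖T s‖ ≤ K) {p : Seminorm ℝ X} (hp : ∀ y, p y ≤ ‖y‖)
    (hα : 0 ≤ α) {x : X} {η δ : ℝ} (hη : 0 ≤ η) (hδ : 0 < δ)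
    (hsmall : ∀ s ∈ Ioo 0 δ, ∀ r ∈ Icc 0 1, p (T r (T s x - x)) ≤ η * s ^ α)
    {t : ℝ} (ht : t ∈ Icc 0 1) (htail : (K + 1) * ‖T t x - x‖ ≤ η * δ ^ α) :
    pFav T α p (T t x - x) ≤ 2 * η := by
  set z := T t x - x
  refine pFav_le T α (by positivity) fun s hs => ?_
  rcases lt_or_ge s δ with hsδ | hδs
  · have hid : T s z - z = T t (T s x - x) - (T s x - x) := by
      simp only [z, map_sub, semigroup_apply_comm hTsg hs.le ht.1]
      abel
    have h0 := hsmall s ⟨hs, hsδ⟩ 0 ⟨le_rfl, zero_le_one⟩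
    rw [hT0, one_apply_eq_self] at h0
    calc p (T s z - z) ≤ p (T t (T s x - x)) + p (T s x - x) := hid ▸ map_sub_le_add p _ _
      _ ≤ η * s ^ α + η * s ^ α := add_le_add (hsmall s ⟨hs, hsδ⟩ t ht) h0
      _ = 2 * η * s ^ α := by ring
  · calc p (T s z - z) ≤ ‖T s z‖ + ‖z‖ := (map_sub_le_add p _ _).trans (add_le_add (hp _) (hp _))
      _ ≤ K * ‖z‖ + ‖z‖ := by gcongr; exact (T s).le_of_opNorm_le (hK s hs.le) z
      _ ≤ η * δ ^ α := by linarith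
      _ ≤ η * s ^ α := by gcongr
      _ ≤ 2 * η * s ^ α := by nlinarith [Real.rpow_nonneg hs.le α]

end

theorem statement12_general
    {X : Type*} [NormedAddCommGroup X] [NormedSpace ℝ X]
    (P : Set (Seminorm ℝ X))
    (hnorm : ∀ x : X, ‖x‖ = sSup {r : ℝ | ∃ p ∈ P, r = p x})
    (T : ℝ → X →L[ℝ] X) (hT0 : T 0 = 1)
    (hTsg : ∀ s t : ℝ, 0 ≤ s → 0 ≤ t → T (t + s) = (T t).comp (T s))
    (M ω : ℝ) (hω : ω < 0)
    (hgrowth : ∀ t : ℝ, 0 ≤ t → ‖T t‖ ≤ M * Real.exp (ω * t))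
    (hbieq : ∀ (u : ℕ → X) (C : ℝ), (∀ n, ‖u n‖ ≤ C) →
      (∀ p ∈ P, Filter.Tendsto (fun n => p (u n)) Filter.atTop (𝓝 0)) →
      ∀ t₀ > (0:ℝ), ∀ p ∈ P, ∀ ε > (0:ℝ), ∃ N : ℕ, ∀ n ≥ N, ∀ s ∈ Set.Icc (0:ℝ) t₀,
        p (T s (u n)) < ε)
    (α : ℝ) (hα : α ∈ Set.Ioo (0:ℝ) 1)
    (x : X) (hx : memX P T α x) :
    ∀ p ∈ P, Filter.Tendsto (fun t : ℝ => pFav T α p (T t x - x))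
      (𝓝[>] (0:ℝ)) (𝓝 0) := by
  intro p hp
  have hM : 0 ≤ M := by simpa using (norm_nonneg _).trans (hgrowth 0 le_rfl)
  have hK : ∀ s ≥ 0, ‖T s‖ ≤ M := fun s hs =>
    (hgrowth s hs).trans <| mul_le_of_le_one_right hM <|
      Real.exp_le_one_iff.mpr (mul_nonpos_of_nonpos_of_nonneg hω.le hs)
  rw [Metric.tendsto_nhds]
  intro ε hε
  obtain ⟨δ, hδ, hsmall⟩ :=
    exists_forall_seminorm_le_of_memX T α hbieq hx one_pos hp (by positivity : 0 < ε / 3)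
  have htail : ∀ᶠ t in 𝓝[>] 0, (M + 1) * ‖T t x - x‖ < ε / 3 * δ ^ α := by
    have := (tendsto_norm_sub_of_memFav T α hx.1 hα.1).const_mul (M + 1)
    rw [mul_zero] at this
    exact this.eventually_lt_const (by positivity)
  filter_upwards [htail, Ioc_mem_nhdsGT zero_lt_one] with t htail ht
  have := pFav_orbit_sub_le α hTsg hT0 hK (seminorm_le_norm_of_norm_eq_sSup hnorm hp)
    hα.1.le (by positivity) hδ hsmall (Ioc_subset_Icc_self ht) htail.le
  rw [Real.dist_0_eq_abs, abs_of_nonneg (pFav_nonneg T α p _)]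
  linarith

/-- The semigroup is strongly `τ_{F_α}`-continuous at `0` on `X_α`:
for every `x ∈ X_α` and `p ∈ 𝒫`, `p_{F_α}(T(t)x − x) → 0` as `t → 0+`. -/
theorem statement12
    {X : Type*} [NormedAddCommGroup X] [NormedSpace ℝ X] [CompleteSpace X]
    (P : Set (Seminorm ℝ X))
    (hnorm : ∀ x : X, ‖x‖ = sSup {r : ℝ | ∃ p ∈ P, r = p x})
    (hcomplete : ∀ (u : ℕ → X) (C : ℝ), (∀ n, ‖u n‖ ≤ C) →
      (∀ p ∈ P, ∀ ε > (0:ℝ), ∃ N : ℕ, ∀ m ≥ N, ∀ n ≥ N, p (u m - u n) < ε) →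
      ∃ x : X, ∀ p ∈ P, Filter.Tendsto (fun n => p (u n - x)) Filter.atTop (𝓝 0))
    (T : ℝ → X →L[ℝ] X) (hT0 : T 0 = 1)
    (hTsg : ∀ s t : ℝ, 0 ≤ s → 0 ≤ t → T (t + s) = (T t).comp (T s))
    (M ω : ℝ) (hM : 1 ≤ M) (hω : ω < 0)
    (hgrowth : ∀ t : ℝ, 0 ≤ t → ‖T t‖ ≤ M * Real.exp (ω * t))
    (horbit : ∀ x : X, ∀ p ∈ P, ∀ t₀ : ℝ, 0 ≤ t₀ →
      Filter.Tendsto (fun t : ℝ => p (T t x - T t₀ x)) (𝓝[Set.Ici 0] t₀) (𝓝 0))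
    (hbieq : ∀ (u : ℕ → X) (C : ℝ), (∀ n, ‖u n‖ ≤ C) →
      (∀ p ∈ P, Filter.Tendsto (fun n => p (u n)) Filter.atTop (𝓝 0)) →
      ∀ t₀ > (0:ℝ), ∀ p ∈ P, ∀ ε > (0:ℝ), ∃ N : ℕ, ∀ n ≥ N, ∀ s ∈ Set.Icc (0:ℝ) t₀,
        p (T s (u n)) < ε)
    (α : ℝ) (hα : α ∈ Set.Ioo (0:ℝ) 1)
    (x : X) (hx : memX P T α x) :
    ∀ p ∈ P, Filter.Tendsto (fun t : ℝ => pFav T α p (T t x - x))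
      (𝓝[>] (0:ℝ)) (𝓝 0) :=
  statement12_general P hnorm T hT0 hTsg M ω hω hgrowth hbieq α hα x hx
end

section
/- For every f ∈ C_b(Ω;ℂ): sup_{t>0} t^{−α} sup_{x∈Ω} |e^{t q(x)} f(x) − f(x)| < ∞ if and only if sup_{x∈Ω} |q(x)|^α |f(x)| < ∞. (Thus the Favard space F_α of the multiplication semigroup is {f ∈ C_b(Ω;ℂ) : |q|^α f is bounded}.) -/
open scoped Topology BoundedContinuousFunction

/-!
Everything is pointwise in `x`, with `z = q x`. Since `Re z ≤ 0`, `‖e^{tz} - 1‖` is at most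
`2 min(1, t‖z‖) ≤ 2 (t‖z‖)^α`, which gives the bound on the difference quotients from a bound on
`|q|^α |f|`. Conversely, evaluating the difference quotient at the time `t = 1 / (2‖z‖)`, where
`‖tz‖ = 1/2` and hence `‖e^{tz} - 1‖ ≥ 1/2 - 1/4`, bounds `‖z‖^α |f(x)|`.
-/

namespace Complex

theorem norm_sub_sq_le_norm_exp_sub_one {w : ℂ} (hw : ‖w‖ ≤ 1) :
    ‖w‖ - ‖w‖ ^ 2 ≤ ‖exp w - 1‖ := by
  have h := norm_exp_sub_one_sub_id_le hw
  have h' : ‖w‖ ≤ ‖exp w - 1‖ + ‖exp w - 1 - w‖ := by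
    simpa using norm_sub_le (exp w - 1) (exp w - 1 - w)
  linarith

theorem norm_exp_sub_one_le_two_mul_rpow {w : ℂ} (hw : w.re ≤ 0) {α : ℝ} (hα₀ : 0 ≤ α)
    (hα₁ : α ≤ 1) : ‖exp w - 1‖ ≤ 2 * ‖w‖ ^ α := by
  rcases le_total ‖w‖ 1 with hle | hge
  · calc ‖exp w - 1‖ ≤ 2 * ‖w‖ := norm_exp_sub_one_le hle
      _ ≤ 2 * ‖w‖ ^ α := by gcongr; exact Real.self_le_rpow_of_le_one (norm_nonneg w) hle hα₁
  · calc ‖exp w - 1‖ ≤ ‖exp w‖ + ‖(1 : ℂ)‖ := norm_sub_le _ _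
      _ ≤ 1 + 1 := by
          rw [norm_one, norm_exp]
          gcongr
          exact Real.exp_le_one_iff.mpr hw
      _ ≤ 2 * ‖w‖ ^ α := by linarith [Real.one_le_rpow hge hα₀]

theorem rpow_norm_mul_le_of_norm_exp_mul_sub_one_mul_le {z : ℂ} {α c C : ℝ} (hα : 0 < α)
    (hc : 0 ≤ c) (h : ∀ t > (0 : ℝ), ‖exp (t * z) - 1‖ * c ≤ C * t ^ α) :
    ‖z‖ ^ α * c ≤ 4 * C := by
  have hC : 0 ≤ C := by
    simpa using (mul_nonneg (norm_nonneg _) hc).trans (h 1 one_pos)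
  rcases eq_or_ne z 0 with rfl | hz
  · simpa [Real.zero_rpow hα.ne'] using hC
  set t : ℝ := 1 / (2 * ‖z‖)
  have ht : 0 < t := by positivity
  have ht_norm : t * ‖z‖ = 1 / 2 := by
    have : ‖z‖ ≠ 0 := norm_ne_zero_iff.mpr hz
    simp only [t]
    field_simp
  have htz : ‖(t : ℂ) * z‖ = 1 / 2 := by
    rw [norm_mul, norm_real, Real.norm_of_nonneg ht.le, ht_norm]
  have hlower : 1 / 4 ≤ ‖exp (t * z) - 1‖ := by
    have := norm_sub_sq_le_norm_exp_sub_one (w := t * z) (by rw [htz]; norm_num)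
    rw [htz] at this
    linarith
  have hscale : t ^ α * ‖z‖ ^ α ≤ 1 := by
    rw [← Real.mul_rpow ht.le (norm_nonneg z)]
    apply Real.rpow_le_one (by positivity) _ hα.le
    rw [ht_norm]
    norm_num
  calc ‖z‖ ^ α * c ≤ ‖z‖ ^ α * (4 * (‖exp (t * z) - 1‖ * c)) := by
        gcongr
        nlinarith
    _ ≤ ‖z‖ ^ α * (4 * (C * t ^ α)) := by grw [h t ht]
    _ = 4 * C * (t ^ α * ‖z‖ ^ α) := by ring
    _ ≤ 4 * C := mul_le_of_le_one_right (by positivity) hscale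

end Complex

theorem statement15_general
    {Ω : Type*} [TopologicalSpace Ω]
    (q : Ω → ℂ)
    (ω : ℝ) (hω : ω < 0) (hqre : ∀ x : Ω, (q x).re ≤ ω)
    (α : ℝ) (hα : α ∈ Set.Ioo (0:ℝ) 1)
    (f : Ω →ᵇ ℂ) :
    (∃ C : ℝ, ∀ t > (0:ℝ), ∀ x : Ω,
        ‖Complex.exp ((t : ℂ) * q x) * f x - f x‖ / t ^ α ≤ C) ↔
    (∃ C : ℝ, ∀ x : Ω, ‖q x‖ ^ α * ‖f x‖ ≤ C) := by
  constructor
  · rintro ⟨C, hC⟩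
    refine ⟨4 * C, fun x =>
      Complex.rpow_norm_mul_le_of_norm_exp_mul_sub_one_mul_le hα.1 (norm_nonneg _) fun t ht => ?_⟩
    have h := hC t ht x
    rwa [div_le_iff₀ (by positivity), ← sub_one_mul, norm_mul] at h
  · rintro ⟨C, hC⟩
    refine ⟨2 * C, fun t ht x => ?_⟩
    have hre : ((t : ℂ) * q x).re ≤ 0 := by
      rw [Complex.re_ofReal_mul]
      nlinarith [hqre x]
    rw [div_le_iff₀ (by positivity), ← sub_one_mul, norm_mul]
    calc ‖Complex.exp (t * q x) - 1‖ * ‖f x‖ ≤ 2 * ‖(t : ℂ) * q x‖ ^ α * ‖f x‖ := by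
          gcongr
          exact Complex.norm_exp_sub_one_le_two_mul_rpow hre hα.1.le hα.2.le
      _ = 2 * (‖q x‖ ^ α * ‖f x‖) * t ^ α := by
          rw [norm_mul, Complex.norm_real, Real.norm_of_nonneg ht.le,
            Real.mul_rpow ht.le (norm_nonneg _)]
          ring
      _ ≤ 2 * C * t ^ α := by grw [hC x]

/-- For `f ∈ C_b(Ω;ℂ)`:
`sup_{t>0} t^{−α} sup_{x∈Ω} |e^{t q(x)} f(x) − f(x)| < ∞` iff
`sup_{x∈Ω} |q(x)|^α |f(x)| < ∞`. -/
theorem statement15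
    {Ω : Type*} [TopologicalSpace Ω]
    (q : Ω → ℂ) (hq : Continuous q)
    (ω : ℝ) (hω : ω < 0) (hqre : ∀ x : Ω, (q x).re ≤ ω)
    (α : ℝ) (hα : α ∈ Set.Ioo (0:ℝ) 1)
    (f : Ω →ᵇ ℂ) :
    (∃ C : ℝ, ∀ t > (0:ℝ), ∀ x : Ω,
        ‖Complex.exp ((t : ℂ) * q x) * f x - f x‖ / t ^ α ≤ C) ↔
    (∃ C : ℝ, ∀ x : Ω, ‖q x‖ ^ α * ‖f x‖ ≤ C) :=
  statement15_general q ω hω hqre α hα f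
end

section
/- Assume additionally that Ω is locally compact Hausdorff and that 1/q vanishes at infinity (1/q ∈ C₀(Ω)). Then the closure, in (C_b(Ω;ℂ), ‖·‖_∞), of the domain dom(M_q) = {f ∈ C_b(Ω;ℂ) : q·f is bounded} of the multiplication operator M_q f := q f equals C₀(Ω;ℂ), the space of continuous functions vanishing at infinity. -/
/-!
An element `f` of the domain satisfies `f = q⁻¹ · (q f)` with `q f` bounded and `q⁻¹ → 0` at
infinity, so `f ∈ C₀`; as `C₀` is closed in `C_b`, it contains the closure of the domain.
Conversely, compactly supported functions lie in the domain because `q` is continuous, and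
every `f ∈ C₀` is a uniform limit of the compactly supported cut-offs `φ • f`, where `φ` is an
Urysohn function equal to `1` on a compact set outside of which `‖f‖` is small.
-/

open Filter Topology BoundedContinuousFunction

theorem Filter.Tendsto.of_isBoundedUnder_mul {ι 𝕜 : Type*} [NormedDivisionRing 𝕜] {l : Filter ι}
    {q f : ι → 𝕜} (hq : ∀ᶠ x in l, q x ≠ 0) (hq_inv : Tendsto (fun x => (q x)⁻¹) l (𝓝 0))
    (hqf : IsBoundedUnder (· ≤ ·) l fun x => ‖q x * f x‖) :
    Tendsto f l (𝓝 0) := by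
  refine (hq_inv.zero_mul_isBoundedUnder_le hqf).congr' ?_
  filter_upwards [hq] with x hx using inv_mul_cancel_left₀ hx (f x)

namespace BoundedContinuousFunction

variable {X E : Type*} [TopologicalSpace X]

theorem isClosed_setOf_tendsto_cocompact_zero [PseudoMetricSpace E] [Zero E] :
    IsClosed {f : X →ᵇ E | Tendsto f (cocompact X) (𝓝 0)} := by
  convert ZeroAtInftyContinuousMap.isClosed_range_toBCF (α := X) (β := E)
  ext f
  exact ⟨fun hf => ⟨⟨f.toContinuousMap, hf⟩, rfl⟩, by rintro ⟨g, rfl⟩; exact g.zero_at_infty'⟩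

theorem mem_closure_setOf_hasCompactSupport [RegularSpace X] [LocallyCompactSpace X]
    [SeminormedAddCommGroup E] [NormedSpace ℝ E] {f : X →ᵇ E}
    (hf : Tendsto f (cocompact X) (𝓝 0)) :
    f ∈ closure {g : X →ᵇ E | HasCompactSupport g} := by
  refine Metric.mem_closure_iff.2 fun ε hε => ?_
  obtain ⟨K, hK, hfK⟩ : ∃ K, IsCompact K ∧ ∀ x ∉ K, ‖f x‖ < ε / 2 := by
    have := (NormedAddGroup.tendsto_nhds_zero.1 hf) (ε / 2) (half_pos hε)
    rcases Filter.mem_cocompact.1 this with ⟨K, hK, hKs⟩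
    exact ⟨K, hK, fun x hx => hKs hx⟩
  obtain ⟨φ, hφK, -, hφc, hφ01⟩ :=
    exists_continuous_one_zero_of_isCompact hK isClosed_empty (Set.disjoint_empty K)
  let φ' : X →ᵇ ℝ := .ofNormedAddCommGroup φ φ.continuous 1 fun x => by
    rw [Real.norm_eq_abs, abs_le]; exact ⟨by linarith [(hφ01 x).1], (hφ01 x).2⟩
  refine ⟨φ' • f, hφc.smul_right, ?_⟩
  refine lt_of_le_of_lt ((dist_le (half_pos hε).le).2 fun x => ?_) (half_lt_self hε)
  have hdist : dist (f x) ((φ' • f) x) = (1 - φ x) * ‖f x‖ := by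
    change dist (f x) (φ x • f x) = _
    rw [dist_eq_norm, ← norm_smul_of_nonneg (sub_nonneg.2 (hφ01 x).2), sub_smul, one_smul]
  by_cases hx : x ∈ K
  · simpa [hdist, hφK hx] using (half_pos hε).le
  · calc dist (f x) ((φ' • f) x) = (1 - φ x) * ‖f x‖ := hdist
      _ ≤ 1 * ‖f x‖ := by gcongr; linarith [(hφ01 x).1]
      _ ≤ ε / 2 := by linarith [hfK x hx]

end BoundedContinuousFunction

theorem HasCompactSupport.exists_norm_mul_le {X R : Type*} [TopologicalSpace X]
    [NonUnitalNormedRing R] {q f : X → R} (hq : Continuous q) (hf : Continuous f)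
    (hfc : HasCompactSupport f) : ∃ C, ∀ x, ‖q x * f x‖ ≤ C :=
  (hq.mul hf).bounded_above_of_compact_support (hfc.mul_left (f := q))

/-- If `Ω` is locally compact Hausdorff and `1/q` vanishes at infinity,
then the sup-norm closure in `C_b(Ω;ℂ)` of the domain
`dom(M_q) = {f : q·f bounded}` of the multiplication operator equals `C₀(Ω;ℂ)`. -/
theorem statement17
    {Ω : Type*} [TopologicalSpace Ω] [LocallyCompactSpace Ω] [T2Space Ω]
    (q : Ω → ℂ) (hq : Continuous q)
    (ω : ℝ) (hω : ω < 0) (hqre : ∀ x : Ω, (q x).re ≤ ω)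
    (hqinf : Filter.Tendsto (fun x : Ω => (q x)⁻¹) (Filter.cocompact Ω) (𝓝 0)) :
    closure {f : Ω →ᵇ ℂ | ∃ C : ℝ, ∀ x : Ω, ‖q x * f x‖ ≤ C} =
      {f : Ω →ᵇ ℂ | Filter.Tendsto (fun x : Ω => f x) (Filter.cocompact Ω) (𝓝 0)} := by
  have hq_ne : ∀ x, q x ≠ 0 := fun x hx => ((hqre x).trans_lt hω).ne (by simp [hx])
  refine (closure_minimal ?_ isClosed_setOf_tendsto_cocompact_zero).antisymm fun f hf => ?_
  · rintro f ⟨C, hC⟩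
    exact Tendsto.of_isBoundedUnder_mul (.of_forall hq_ne) hqinf (isBoundedUnder_of ⟨C, hC⟩)
  · refine closure_mono (fun g hg => ?_) (mem_closure_setOf_hasCompactSupport hf)
    exact hg.exists_norm_mul_le hq g.continuous
end
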